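/- arXiv:1706.04935 — 2 statements merged into one kernel-verified Lean document; each statement's English description precedes it below -/
import Mathlib

section
/- Let D ⊆ [n]² be a diagram with columns D_j = {i : (i,j) ∈ D}. The function θ_D : 2^{[n]} → ℤ_{≥0} is submodular: for all I, J ⊆ [n], θ_D(I) + θ_D(J) ≥ θ_D(I ∪ J) + θ_D(I ∩ J). -/
open Finset

/-- Auxiliary greedy matching count for a parenthesis word (`true` = '(', `false` = ')'),
given the current number of unmatched open parentheses. -/
def matchedPairsAux : List Bool → ℕ → ℕ
  | [], _ => 0
  | true :: rest, o => matchedPairsAux rest (o + 1)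
  | false :: rest, 0 => matchedPairsAux rest 0
  | false :: rest, o + 1 => matchedPairsAux rest o + 1

/-- The number of paired `()`'s in a parenthesis word (`true` = '(', `false` = ')'). -/
def matchedPairs (w : List Bool) : ℕ := matchedPairsAux w 0

/-- Column `j` of a diagram `D ⊆ [n]²`: the set `D_j = {i : (i,j) ∈ D}`. -/
def colSet {n : ℕ} (D : Finset (Fin n × Fin n)) (j : Fin n) : Finset (Fin n) :=
  Finset.univ.filter fun i => (i, j) ∈ D

/-- The parenthesis part of `word_{j,I}(D)`: reading rows `i` from top to bottom, record
'(' (= `true`) if `(i,j) ∉ D` and `i ∈ I`, and ')' (= `false`) if `(i,j) ∈ D` and `i ∉ I`.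
(The `⋆`'s, at positions with `(i,j) ∈ D` and `i ∈ I`, play no role in the matching.) -/
def colWord {n : ℕ} (D : Finset (Fin n × Fin n)) (j : Fin n) (I : Finset (Fin n)) :
    List Bool :=
  (List.finRange n).filterMap fun i =>
    if (i, j) ∈ D then (if i ∈ I then none else some false)
    else (if i ∈ I then some true else none)

/-- `θ_D^j(I)`: the number of paired `()`'s plus the number of `⋆`'s in `word_{j,I}(D)`. -/
def thetaCol {n : ℕ} (D : Finset (Fin n × Fin n)) (j : Fin n) (I : Finset (Fin n)) : ℕ :=
  matchedPairs (colWord D j I) + (colSet D j ∩ I).card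

/-- `θ_D(I) = Σ_{j=1}^n θ_D^j(I)`. -/
def theta {n : ℕ} (D : Finset (Fin n × Fin n)) (I : Finset (Fin n)) : ℕ :=
  ∑ j : Fin n, thetaCol D j I

-- L1
theorem mpa_le_count_false : ∀ (w : List Bool) (o : ℕ), matchedPairsAux w o ≤ w.count false
  | [], o => by simp [matchedPairsAux]
  | true :: w, o => by
    simpa [matchedPairsAux, List.count_cons] using mpa_le_count_false w (o+1)
  | false :: w, 0 => by
    simp only [matchedPairsAux, List.count_cons]; simp only [beq_self_eq_true, if_true, show (true == false) = false from rfl, if_false]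
    have := mpa_le_count_false w 0; omega
  | false :: w, o + 1 => by
    simp only [matchedPairsAux, List.count_cons]; simp only [beq_self_eq_true, if_true, show (true == false) = false from rfl, if_false]
    have := mpa_le_count_false w o; omega

-- L2
theorem mpa_le_split : ∀ (w : List Bool) (o k : ℕ),
    matchedPairsAux w o ≤ o + (w.take k).count true + (w.drop k).count false
  | [], o, k => by simp [matchedPairsAux]
  | true :: w, o, 0 => by
    simp only [List.take_succ_cons, List.drop_succ_cons, List.take_zero, List.drop_zero, List.count_cons, List.count_nil]; simp only [beq_self_eq_true, if_true, show (true == false) = false from rfl, show (false == true) = false from rfl, if_false]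
    have := mpa_le_count_false w (o+1)
    simp only [matchedPairsAux]; omega
  | true :: w, o, k + 1 => by
    simp only [matchedPairsAux, List.take_succ_cons, List.drop_succ_cons, List.count_cons]; simp only [beq_self_eq_true, if_true, show (true == false) = false from rfl, show (false == true) = false from rfl, if_false]
    have := mpa_le_split w (o+1) k; omega
  | false :: w, 0, 0 => by
    simp only [matchedPairsAux, List.take_zero, List.drop_zero, List.count_cons, List.count_nil]; simp only [beq_self_eq_true, if_true, show (true == false) = false from rfl, show (false == true) = false from rfl, if_false]
    have := mpa_le_split w 0 0
    simp only [List.take, List.drop, List.count_nil] at this; omega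
  | false :: w, 0, k + 1 => by
    simp only [matchedPairsAux, List.take_succ_cons, List.drop_succ_cons, List.count_cons]; simp only [beq_self_eq_true, if_true, show (true == false) = false from rfl, show (false == true) = false from rfl, if_false]
    have := mpa_le_split w 0 k; omega
  | false :: w, o + 1, 0 => by
    simp only [matchedPairsAux, List.take_zero, List.drop_zero, List.count_cons, List.count_nil]; simp only [beq_self_eq_true, if_true, show (true == false) = false from rfl, show (false == true) = false from rfl, if_false]
    have := mpa_le_count_false w o; omega
  | false :: w, o + 1, k + 1 => by
    simp only [matchedPairsAux, List.take_succ_cons, List.drop_succ_cons, List.count_cons]; simp only [beq_self_eq_true, if_true, show (true == false) = false from rfl, show (false == true) = false from rfl, if_false]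
    have := mpa_le_split w o k; omega

def maxDef : List Bool → ℕ
  | [] => 0
  | true :: w => maxDef w - 1
  | false :: w => maxDef w + 1

theorem mpa_add_maxDef : ∀ (w : List Bool) (o : ℕ),
    matchedPairsAux w o + (maxDef w - o) = w.count false
  | [], o => by simp [matchedPairsAux, maxDef]
  | true :: w, o => by
    simp only [matchedPairsAux, maxDef, List.count_cons]
    have := mpa_add_maxDef w (o+1); simp_all; omega
  | false :: w, 0 => by
    simp only [matchedPairsAux, maxDef, List.count_cons]
    have := mpa_add_maxDef w 0; simp_all; omega
  | false :: w, o + 1 => by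
    simp only [matchedPairsAux, maxDef, List.count_cons]
    have := mpa_add_maxDef w o; simp_all; omega

theorem exists_maxDef_split : ∀ (w : List Bool), ∃ k, k ≤ w.length ∧
    (w.take k).count false = (w.take k).count true + maxDef w
  | [] => ⟨0, by simp [maxDef]⟩
  | true :: w => by
    rcases Nat.eq_zero_or_pos (maxDef w) with h | h
    · exact ⟨0, by simp [maxDef, h]⟩
    · obtain ⟨k, hk, he⟩ := exists_maxDef_split w
      refine ⟨k + 1, by simpa using hk, ?_⟩
      simp only [List.take_succ_cons, List.count_cons, maxDef]
      simp only [beq_iff_eq]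
      norm_num
      omega
  | false :: w => by
    obtain ⟨k, hk, he⟩ := exists_maxDef_split w
    refine ⟨k + 1, by simpa using hk, ?_⟩
    simp only [List.take_succ_cons, List.count_cons, maxDef]
    simp only [beq_iff_eq]
    norm_num
    omega

theorem exists_split_le (w : List Bool) : ∃ k, k ≤ w.length ∧
    (w.take k).count true + (w.drop k).count false ≤ matchedPairs w := by
  obtain ⟨k, hk, he⟩ := exists_maxDef_split w
  refine ⟨k, hk, ?_⟩
  have h1 := mpa_add_maxDef w 0
  have h2 : (w.take k).count false + (w.drop k).count false = w.count false := by
    rw [← List.count_append, List.take_append_drop]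
  simp only [matchedPairs] at *
  omega

theorem filterMap_prefix {α : Type*} (f : α → Option Bool) :
    ∀ (l : List α) (k : ℕ), k ≤ (l.filterMap f).length →
    ∃ t, (l.take t).filterMap f = (l.filterMap f).take k ∧
         (l.drop t).filterMap f = (l.filterMap f).drop k
  | [], k, hk => ⟨0, by simp_all⟩
  | a :: l, k, hk => by
    cases hfa : f a with
    | none =>
      simp only [List.filterMap_cons, hfa] at hk ⊢
      obtain ⟨t, h1, h2⟩ := filterMap_prefix f l k hk
      exact ⟨t + 1, by simpa [List.take, List.drop, List.filterMap_cons, hfa] using ⟨h1, h2⟩⟩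
    | some b =>
      cases k with
      | zero => exact ⟨0, by simp⟩
      | succ k =>
        simp only [List.filterMap_cons, hfa, List.length_cons] at hk ⊢
        obtain ⟨t, h1, h2⟩ := filterMap_prefix f l k (by omega)
        exact ⟨t + 1, by simpa [List.take, List.drop, List.filterMap_cons, hfa] using ⟨h1, h2⟩⟩

theorem count_filterMap_eq {α : Type*} (f : α → Option Bool) (b : Bool) :
    ∀ (l : List α), (l.filterMap f).count b = l.countP (fun a => f a == some b)
  | [] => by simp
  | a :: l => by
    cases hfa : f a with
    | none => simp [List.filterMap_cons, hfa, List.countP_cons, count_filterMap_eq f b l]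
    | some c =>
      by_cases hcb : c = b <;>
        simp [List.filterMap_cons, hfa, List.countP_cons, List.count_cons,
          count_filterMap_eq f b l, hcb]



theorem mem_take_finRange {n t : ℕ} {i : Fin n} (h : i ∈ (List.finRange n).take t) :
    i.val < t := by
  rw [List.mem_iff_getElem] at h
  obtain ⟨m, hm, he⟩ := h
  have hm' := hm
  simp only [List.length_take, List.length_finRange] at hm'
  rw [List.getElem_take, List.getElem_finRange] at he
  subst he; simpa using by omega

theorem mem_drop_finRange {n t : ℕ} {i : Fin n} (h : i ∈ (List.finRange n).drop t) :
    t ≤ i.val := by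
  rw [List.mem_iff_getElem] at h
  obtain ⟨m, hm, he⟩ := h
  rw [List.getElem_drop, List.getElem_finRange] at he
  subst he; simp

theorem countP_eq_sum_map {α : Type*} (p : α → Bool) :
    ∀ l : List α, l.countP p = (l.map fun a => if p a then 1 else 0).sum
  | [] => by simp
  | a :: l => by
    by_cases h : p a <;> simp [List.countP_cons, h, countP_eq_sum_map p l, Nat.add_comm]

theorem countP_finRange_eq_sum {n : ℕ} (p : Fin n → Bool) :
    (List.finRange n).countP p = ∑ i : Fin n, if p i then 1 else 0 := by
  rw [Fin.sum_univ_def, countP_eq_sum_map]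

theorem countP_take_finRange {n t : ℕ} (p : Fin n → Bool) :
    ((List.finRange n).take t).countP p
      = ∑ i : Fin n, if p i ∧ i.val < t then 1 else 0 := by
  set q : Fin n → Bool := fun i => p i && decide (i.val < t) with hq
  have hsplit : (List.finRange n).countP q
      = ((List.finRange n).take t).countP q + ((List.finRange n).drop t).countP q := by
    rw [← List.countP_append, List.take_append_drop]
  have hdrop : ((List.finRange n).drop t).countP q = 0 := by
    rw [List.countP_eq_zero]
    intro i hi
    have := mem_drop_finRange hi
    simp [hq]; omega
  have htake : ((List.finRange n).take t).countP q
      = ((List.finRange n).take t).countP p := by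
    apply List.countP_congr
    intro i hi
    have := mem_take_finRange hi
    simp [hq, this]
  rw [countP_finRange_eq_sum] at hsplit
  have : ((List.finRange n).take t).countP p = ∑ i : Fin n, if q i then 1 else 0 := by omega
  rw [this]
  apply Finset.sum_congr rfl
  intro i _
  simp [hq, Bool.and_eq_true, decide_eq_true_iff]

theorem countP_drop_finRange {n t : ℕ} (p : Fin n → Bool) :
    ((List.finRange n).drop t).countP p
      = ∑ i : Fin n, if p i ∧ ¬ i.val < t then 1 else 0 := by
  have h1 : (List.finRange n).countP p = ∑ i : Fin n, ((if p i ∧ i.val < t then 1 else 0)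
      + (if p i ∧ ¬ i.val < t then 1 else 0)) := by
    rw [countP_finRange_eq_sum]
    apply Finset.sum_congr rfl
    intro i _
    by_cases hp : p i <;> by_cases hlt : i.val < t <;> simp [hp, hlt]
  have h2 : (List.finRange n).countP p
      = ((List.finRange n).take t).countP p + ((List.finRange n).drop t).countP p := by
    rw [← List.countP_append, List.take_append_drop]
  rw [Finset.sum_add_distrib] at h1
  rw [countP_take_finRange] at h2
  omega



def wordFun {n : ℕ} (D : Finset (Fin n × Fin n)) (j : Fin n) (I : Finset (Fin n))
    (i : Fin n) : Option Bool :=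
  if (i, j) ∈ D then (if i ∈ I then none else some false)
  else (if i ∈ I then some true else none)

theorem colWord_eq {n : ℕ} (D : Finset (Fin n × Fin n)) (j : Fin n) (I : Finset (Fin n)) :
    colWord D j I = (List.finRange n).filterMap (wordFun D j I) := rfl

theorem wordFun_true {n : ℕ} (D : Finset (Fin n × Fin n)) (j : Fin n) (I : Finset (Fin n))
    (i : Fin n) : (wordFun D j I i == some true) = decide ((i, j) ∉ D ∧ i ∈ I) := by
  by_cases hD : (i, j) ∈ D <;> by_cases hI : i ∈ I <;> simp [wordFun, hD, hI]

theorem wordFun_false {n : ℕ} (D : Finset (Fin n × Fin n)) (j : Fin n) (I : Finset (Fin n))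
    (i : Fin n) : (wordFun D j I i == some false) = decide ((i, j) ∈ D ∧ i ∉ I) := by
  by_cases hD : (i, j) ∈ D <;> by_cases hI : i ∈ I <;> simp [wordFun, hD, hI]

theorem stars_eq {n : ℕ} (D : Finset (Fin n × Fin n)) (j : Fin n) (I : Finset (Fin n)) :
    (colSet D j ∩ I).card = ∑ i : Fin n, if (i, j) ∈ D ∧ i ∈ I then 1 else 0 := by
  have : colSet D j ∩ I = Finset.univ.filter (fun i => (i, j) ∈ D ∧ i ∈ I) := by
    ext i; simp [colSet, Finset.mem_filter, Finset.mem_inter]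
  rw [this, Finset.card_filter]

def hcol {n : ℕ} (D : Finset (Fin n × Fin n)) (j : Fin n) (I : Finset (Fin n)) (t : ℕ) : ℕ :=
  ∑ i : Fin n, ((if (i, j) ∉ D ∧ i ∈ I ∧ i.val < t then 1 else 0)
    + (if (i, j) ∈ D ∧ i ∉ I ∧ ¬ i.val < t then 1 else 0)
    + (if (i, j) ∈ D ∧ i ∈ I then 1 else 0))

theorem count_true_take {n : ℕ} (D : Finset (Fin n × Fin n)) (j : Fin n) (I : Finset (Fin n))
    (t : ℕ) : (((List.finRange n).take t).filterMap (wordFun D j I)).count true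
      = ∑ i : Fin n, if (i, j) ∉ D ∧ i ∈ I ∧ i.val < t then 1 else 0 := by
  rw [count_filterMap_eq, countP_take_finRange]
  apply Finset.sum_congr rfl
  intro i _
  rw [wordFun_true]
  simp [and_assoc]

theorem count_false_drop {n : ℕ} (D : Finset (Fin n × Fin n)) (j : Fin n) (I : Finset (Fin n))
    (t : ℕ) : (((List.finRange n).drop t).filterMap (wordFun D j I)).count false
      = ∑ i : Fin n, if (i, j) ∈ D ∧ i ∉ I ∧ ¬ i.val < t then 1 else 0 := by
  rw [count_filterMap_eq, countP_drop_finRange]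
  apply Finset.sum_congr rfl
  intro i _
  rw [wordFun_false]
  simp [and_assoc]

theorem hcol_split {n : ℕ} (D : Finset (Fin n × Fin n)) (j : Fin n) (I : Finset (Fin n))
    (t : ℕ) : hcol D j I t
      = (((List.finRange n).take t).filterMap (wordFun D j I)).count true
        + (((List.finRange n).drop t).filterMap (wordFun D j I)).count false
        + (colSet D j ∩ I).card := by
  rw [count_true_take, count_false_drop, stars_eq, hcol, ← Finset.sum_add_distrib,
    ← Finset.sum_add_distrib]

theorem thetaCol_le_hcol {n : ℕ} (D : Finset (Fin n × Fin n)) (j : Fin n) (I : Finset (Fin n))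
    (t : ℕ) : thetaCol D j I ≤ hcol D j I t := by
  have f := wordFun D j I
  clear f
  set l := List.finRange n with hl
  set f := wordFun D j I with hf
  have hsplit : colWord D j I = (l.take t).filterMap f ++ (l.drop t).filterMap f := by
    rw [← List.filterMap_append, List.take_append_drop, colWord_eq]
  set k := ((l.take t).filterMap f).length with hk
  have htake : (colWord D j I).take k = (l.take t).filterMap f := by
    rw [hsplit, hk, List.take_left]
  have hdrop : (colWord D j I).drop k = (l.drop t).filterMap f := by
    rw [hsplit, hk, List.drop_left]
  have hle := mpa_le_split (colWord D j I) 0 k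
  rw [htake, hdrop] at hle
  rw [thetaCol, hcol_split, ← hl, ← hf]
  have : matchedPairs (colWord D j I) = matchedPairsAux (colWord D j I) 0 := rfl
  omega

theorem exists_hcol_le_thetaCol {n : ℕ} (D : Finset (Fin n × Fin n)) (j : Fin n)
    (I : Finset (Fin n)) : ∃ t, hcol D j I t ≤ thetaCol D j I := by
  obtain ⟨k, hk, hle⟩ := exists_split_le (colWord D j I)
  obtain ⟨t, h1, h2⟩ := filterMap_prefix (wordFun D j I) (List.finRange n) k
    (by rw [← colWord_eq]; exact hk)
  refine ⟨t, ?_⟩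
  rw [hcol_split, h1, h2, ← colWord_eq]
  rw [thetaCol]
  omega

theorem hcol_cross {n : ℕ} (D : Finset (Fin n × Fin n)) (j : Fin n) (I J : Finset (Fin n))
    {a b : ℕ} (hab : a ≤ b) :
    hcol D j (I ∪ J) a + hcol D j (I ∩ J) b ≤ hcol D j I a + hcol D j J b := by
  rw [hcol, hcol, hcol, hcol, ← Finset.sum_add_distrib, ← Finset.sum_add_distrib]
  apply Finset.sum_le_sum
  intro i _
  have hiab : i.val < a → i.val < b := fun h => lt_of_lt_of_le h hab
  by_cases hD : (i, j) ∈ D <;> by_cases hI : i ∈ I <;> by_cases hJ : i ∈ J <;>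
    by_cases ha : i.val < a <;> by_cases hb : i.val < b <;>
    simp [hD, hI, hJ, ha, hb, Finset.mem_union, Finset.mem_inter] <;> omega

theorem thetaCol_submod {n : ℕ} (D : Finset (Fin n × Fin n)) (j : Fin n)
    (I J : Finset (Fin n)) :
    thetaCol D j (I ∪ J) + thetaCol D j (I ∩ J) ≤ thetaCol D j I + thetaCol D j J := by
  obtain ⟨a, ha⟩ := exists_hcol_le_thetaCol D j I
  obtain ⟨b, hb⟩ := exists_hcol_le_thetaCol D j J
  rcases le_total a b with hab | hab
  · have h1 := thetaCol_le_hcol D j (I ∪ J) a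
    have h2 := thetaCol_le_hcol D j (I ∩ J) b
    have h3 := hcol_cross D j I J hab
    omega
  · have h1 := thetaCol_le_hcol D j (I ∪ J) b
    have h2 := thetaCol_le_hcol D j (I ∩ J) a
    have h3 := hcol_cross D j J I hab
    rw [Finset.union_comm J I, Finset.inter_comm J I] at h3
    omega


/-- The function `θ_D : 2^{[n]} → ℤ_{≥0}` is submodular:
`θ_D(I) + θ_D(J) ≥ θ_D(I ∪ J) + θ_D(I ∩ J)` for all `I, J ⊆ [n]`. -/
theorem stmt4 (n : ℕ) (D : Finset (Fin n × Fin n)) (I J : Finset (Fin n)) :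
    theta D (I ∪ J) + theta D (I ∩ J) ≤ theta D I + theta D J := by
  simp only [theta, ← Finset.sum_add_distrib]
  exact Finset.sum_le_sum fun j _ => thetaCol_submod D j I J
end

section
/- Let D = (D_1, ..., D_n) with each D_j ⊆ [n]. Every lattice point of the Minkowski sum Σ_{j=1}^n P(SM_n(D_j)) can be written as Σ_{j=1}^n ζ^{B_j}, where for each j, B_j is a basis of SM_n(D_j) (i.e., B_j ≤ D_j) and ζ^{B_j} ∈ {0,1}^n is its indicator vector. -/
/-!
A set `B` is a basis of `SM_n(S)` iff `#B = #S` and `#{b ∈ B | b < t} ≥ #{s ∈ S | s < t}` for all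
`t`, so `P(SM_n(S))` lies in the polytope of `x ∈ [0,1]^n` satisfying the corresponding prefix-sum
inequalities and total sum. Writing the lattice point as `p = ∑ j, g j`, the matrix `(g j i)` lies
in the polytope of matrices whose row `j` satisfies the constraints of `D j` and whose column sums
are `p`; it suffices to find a `0/1` point of this polytope.

Take an extreme point `w`. Cut each row at its tight prefixes into blocks. Every block and every
column has an integral sum, so one containing a fractional entry contains two. Hence the blocks and
columns meeting the fractional entries number at most as many as those entries, and as their sums
satisfy one linear relation, some nonzero `d` supported on the fractional entries has all block and
column sums zero. Then `w ± θ • d` stays in the polytope for small `θ`, contradicting extremality.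
-/

open Finset Pointwise

/-- `DomLE R S`: `R` and `S` have the same cardinality and, for each `k`, the `k`-th least
element of `R` does not exceed the `k`-th least element of `S`.  The bases of the Schubert
matroid `SM_n(S)` are exactly the `B` with `DomLE B S`. -/
def DomLE {α : Type*} [LinearOrder α] (R S : Finset α) : Prop :=
  R.card = S.card ∧
    ∀ (k : ℕ) (hR : k < (R.sort (· ≤ ·)).length) (hS : k < (S.sort (· ≤ ·)).length),
      (R.sort (· ≤ ·)).get ⟨k, hR⟩ ≤ (S.sort (· ≤ ·)).get ⟨k, hS⟩

/-- Indicator vector `ζ^B ∈ {0,1}^n ⊆ ℝ^n` of a subset `B ⊆ [n]`. -/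
def indVec {n : ℕ} (B : Finset (Fin n)) : Fin n → ℝ := fun i => if i ∈ B then 1 else 0

/-- Matroid polytope `P(SM_n(S))` of the Schubert matroid `SM_n(S)`: the convex hull in
`ℝ^n` of the indicator vectors of its bases, i.e. of the `B` with `B ≤ S`. -/
def smPolytope {n : ℕ} (S : Finset (Fin n)) : Set (Fin n → ℝ) :=
  convexHull ℝ {x | ∃ B : Finset (Fin n), DomLE B S ∧ x = indVec B}

open Filter Topology

section DomLE

variable {α : Type*} [LinearOrder α]

theorem Finset.sort_get_lt_iff (s : Finset α) {k : ℕ} (hk : k < (s.sort (· ≤ ·)).length)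
    (t : α) : (s.sort (· ≤ ·)).get ⟨k, hk⟩ < t ↔ k < #{x ∈ s | x < t} := by
  set e := s.orderEmbOfFin rfl
  have hk' : k < #s := by simpa using hk
  change e ⟨k, hk'⟩ < t ↔ _
  constructor
  · intro h
    have hsub : (Iic (⟨k, hk'⟩ : Fin #s)).map e.toEmbedding ⊆ {x ∈ s | x < t} := by
      simp only [subset_iff, mem_map, mem_Iic, mem_filter]
      rintro _ ⟨i, hi, rfl⟩
      exact ⟨s.orderEmbOfFin_mem rfl i, (e.monotone hi).trans_lt h⟩
    simpa using (card_le_card hsub)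
  · intro h
    by_contra! h'
    have hsub : {x ∈ s | x < t} ⊆ (Iio (⟨k, hk'⟩ : Fin #s)).map e.toEmbedding := by
      intro x hx
      rw [mem_filter] at hx
      obtain ⟨i, rfl⟩ : x ∈ Set.range e := by simpa [e] using hx.1
      exact mem_map_of_mem _ (mem_Iio.2 (e.lt_iff_lt.1 (hx.2.trans_le h')))
    simpa using (card_le_card hsub).trans_lt' h

theorem domLE_iff_card_filter_lt {R S : Finset α} :
    DomLE R S ↔ #R = #S ∧ ∀ t, #{x ∈ S | x < t} ≤ #{x ∈ R | x < t} := by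
  refine and_congr_right fun hcard => ⟨fun hle t => ?_, fun hcnt k hR hS => ?_⟩
  · by_contra! h
    have hS : #{x ∈ R | x < t} < (S.sort (· ≤ ·)).length :=
      h.trans_le ((card_filter_le _ _).trans (length_sort _).ge)
    have hR : #{x ∈ R | x < t} < (R.sort (· ≤ ·)).length := by simpa [hcard] using hS
    exact lt_irrefl _
      ((R.sort_get_lt_iff hR t).1 ((hle _ hR hS).trans_lt ((S.sort_get_lt_iff hS t).2 h)))
  · by_contra! h
    have h1 := (S.sort_get_lt_iff hS _).1 h
    have h2 := (R.sort_get_lt_iff hR _).not.1 (lt_irrefl _)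
    have := hcnt ((R.sort (· ≤ ·)).get ⟨k, hR⟩)
    omega

theorem domLE_iff_forall_le {n : ℕ} {B S : Finset (Fin n)} :
    DomLE B S ↔ #B = #S ∧ ∀ t ≤ n, #{i ∈ S | i.val < t} ≤ #{i ∈ B | i.val < t} := by
  rw [domLE_iff_card_filter_lt]
  refine and_congr_right fun hcard => ⟨fun h t ht => ?_, fun h t => ?_⟩
  · rcases ht.lt_or_eq with ht | rfl
    · simpa [Fin.lt_def] using h ⟨t, ht⟩
    · simp [hcard]
  · simpa only [Fin.lt_def] using h t t.isLt.le

end DomLE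

theorem Finset.exists_filter_le_eq_iff {α : Type*} [LinearOrder α] (T : Finset α) {x : α}
    (hlow : ∃ s ∈ T, s ≤ x) (hup : ∃ e ∈ T, x < e) :
    ∃ s ∈ T, ∃ e ∈ T, ∀ y, {t ∈ T | t ≤ y} = {t ∈ T | t ≤ x} ↔ s ≤ y ∧ y < e := by
  have hL : ({t ∈ T | t ≤ x}).Nonempty := by simpa [Finset.Nonempty] using hlow
  have hU : ({t ∈ T | x < t}).Nonempty := by simpa [Finset.Nonempty] using hup
  obtain ⟨hsT, hsx⟩ := mem_filter.1 (max'_mem _ hL)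
  obtain ⟨heT, hxe⟩ := mem_filter.1 (min'_mem _ hU)
  refine ⟨_, hsT, _, heT, fun y => ⟨fun h => ?_, fun ⟨hsy, hye⟩ => ?_⟩⟩
  · have hs : max' _ hL ∈ {t ∈ T | t ≤ y} := by rw [h]; exact mem_filter.2 ⟨hsT, hsx⟩
    have he : min' _ hU ∉ {t ∈ T | t ≤ y} := by
      rw [h]; exact fun he => (mem_filter.1 he).2.not_gt hxe
    simp only [mem_filter, not_and, not_le] at hs he
    exact ⟨hs.2, he heT⟩
  · ext t
    simp only [mem_filter, and_congr_right_iff]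
    intro htT
    refine ⟨fun hty => ?_, fun htx => (le_max' _ t (mem_filter.2 ⟨htT, htx⟩)).trans hsy⟩
    by_contra! hxt
    exact (hye.trans_le (min'_le _ t (mem_filter.2 ⟨htT, hxt⟩))).not_ge hty

theorem Finset.exists_ne_notMem_of_sum_mem {α M : Type*} [AddCommGroup M] {H : AddSubgroup M}
    {s : Finset α} {w : α → M} {a : α} (hs : ∑ x ∈ s, w x ∈ H) (ha : a ∈ s) (hwa : w a ∉ H) :
    ∃ b ∈ s, b ≠ a ∧ w b ∉ H := by
  classical
  by_contra! h
  rw [← add_sum_erase s w ha] at hs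
  have hrest := H.sum_mem fun b hb => h b (mem_of_mem_erase hb) (ne_of_mem_erase hb)
  exact hwa (by simpa using H.sub_mem hs hrest)

section Fibers

variable {α β γ : Type*}

theorem Finset.two_mul_card_image_le [DecidableEq β] {s : Finset α} {f : α → β}
    (hf : ∀ a ∈ s, ∃ b ∈ s, b ≠ a ∧ f b = f a) : 2 * #(s.image f) ≤ #s := by
  rw [card_eq_sum_card_image f s, mul_comm, ← smul_eq_mul, ← sum_const]
  refine sum_le_sum fun b hb => ?_
  obtain ⟨a, ha, rfl⟩ := mem_image.1 hb
  obtain ⟨a', ha', hne, hfa⟩ := hf a ha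
  exact one_lt_card.2 ⟨a, by simp [ha], a', by simp [ha', hfa], hne.symm⟩

theorem Finset.sum_filter_comp_eq_zero {M : Type*} [DecidableEq β] [AddCommMonoid M]
    {s : Finset α} {f : α → β} {d : α → M} (h : ∀ b ∈ s.image f, ∑ a ∈ s with f a = b, d a = 0)
    (P : β → Prop) [DecidablePred P] : ∑ a ∈ s with P (f a), d a = 0 := by
  rw [← sum_fiberwise_of_maps_to (fun a ha => mem_image_of_mem f ha)]
  refine sum_eq_zero fun b hb => ?_
  obtain ⟨a, ha, rfl⟩ := mem_image.1 hb
  rw [filter_filter, ← h (f a) (mem_image_of_mem f (mem_filter.1 ha).1)]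
  refine sum_congr (filter_congr fun x _ => ?_) fun _ _ => rfl
  exact ⟨And.right, fun hx => ⟨hx ▸ (mem_filter.1 ha).2, hx⟩⟩

theorem exists_ne_zero_sum_fiber_eq_zero [Fintype α] [DecidableEq β] [DecidableEq γ]
    {s : Finset α} (hs : s.Nonempty) {f : α → β} {g : α → γ}
    (hf : ∀ a ∈ s, ∃ b ∈ s, b ≠ a ∧ f b = f a) (hg : ∀ a ∈ s, ∃ b ∈ s, b ≠ a ∧ g b = g a) :
    ∃ d : α → ℝ, d ≠ 0 ∧ (∀ a ∉ s, d a = 0) ∧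
      (∀ b ∈ s.image f, ∑ a ∈ s with f a = b, d a = 0) ∧
      ∀ c ∈ s.image g, ∑ a ∈ s with g a = c, d a = 0 := by
  classical
  let Φ : (α → ℝ) →ₗ[ℝ] ((s.image f → ℝ) × (s.image g → ℝ)) × ({a // a ∉ s} → ℝ) :=
    ((LinearMap.pi fun b => ∑ a ∈ s with f a = b.1, LinearMap.proj a).prod
      (LinearMap.pi fun c => ∑ a ∈ s with g a = c.1, LinearMap.proj a)).prod
      (LinearMap.pi fun a => LinearMap.proj a.1)
  have hΦ (d : α → ℝ) : Φ d = (((fun b => ∑ a ∈ s with f a = b.1, d a),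
      fun c => ∑ a ∈ s with g a = c.1, d a), fun a => d a.1) := by
    ext <;> simp [Φ]
  -- Both families of fiber sums add up to `∑ a ∈ s, d a`, so `((1, 0), 0)` is not in the range.
  have hnotsurj : LinearMap.range Φ ≠ ⊤ := by
    intro htop
    obtain ⟨d, hd⟩ := LinearMap.range_eq_top.1 htop (((fun _ => 1), 0), 0)
    simp only [hΦ, Prod.mk.injEq] at hd
    have hfsum := congrArg (fun v => ∑ b, v b) hd.1.1
    have hgsum := congrArg (fun v => ∑ c, v c) hd.1.2
    simp only [sum_coe_sort (s.image f) (fun b => ∑ a ∈ s with f a = b, d a),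
      sum_coe_sort (s.image g) (fun c => ∑ a ∈ s with g a = c, d a),
      sum_fiberwise_of_maps_to (fun a ha => mem_image_of_mem _ ha)] at hfsum hgsum
    simp only [hgsum, Pi.zero_apply, sum_const_zero, sum_const, card_univ,
      Fintype.card_coe, nsmul_eq_mul, mul_one] at hfsum
    exact (hs.image f).card_pos.ne' (by exact_mod_cast hfsum.symm)
  have hdim : Module.finrank ℝ (((s.image f → ℝ) × (s.image g → ℝ)) × ({a // a ∉ s} → ℝ)) ≤
      Module.finrank ℝ (α → ℝ) := by
    have := two_mul_card_image_le hf
    have := two_mul_card_image_le hg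
    have := card_add_card_compl s
    simp only [Module.finrank_prod, Module.finrank_fintype_fun_eq_card, Fintype.card_coe,
      Fintype.card_subtype_compl]
    omega
  obtain ⟨d, hdker, hd0⟩ := Submodule.exists_mem_ne_zero_of_ne_bot <|
    LinearMap.ker_rangeRestrict Φ ▸
      LinearMap.ker_ne_bot_of_finrank_lt ((Submodule.finrank_lt hnotsurj).trans_le hdim)
  rw [LinearMap.mem_ker, hΦ] at hdker
  simp only [Prod.mk_eq_zero, funext_iff, Pi.zero_apply, Subtype.forall] at hdker
  exact ⟨d, hd0, hdker.2, hdker.1.1, hdker.1.2⟩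

theorem exists_ne_zero_sum_filter_comp_eq_zero [Fintype α] [DecidableEq β] [DecidableEq γ]
    {s : Finset α} (hs : s.Nonempty) {f : α → β} {g : α → γ}
    (hf : ∀ a ∈ s, ∃ b ∈ s, b ≠ a ∧ f b = f a) (hg : ∀ a ∈ s, ∃ b ∈ s, b ≠ a ∧ g b = g a) :
    ∃ d : α → ℝ, d ≠ 0 ∧ (∀ a ∉ s, d a = 0) ∧
      (∀ (P : β → Prop) [DecidablePred P], ∑ a with P (f a), d a = 0) ∧
      ∀ (Q : γ → Prop) [DecidablePred Q], ∑ a with Q (g a), d a = 0 := by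
  obtain ⟨d, hd0, hout, hfd, hgd⟩ := exists_ne_zero_sum_fiber_eq_zero hs hf hg
  have hsupp (P : α → Prop) [DecidablePred P] : ∑ a with P a, d a = ∑ a ∈ s with P a, d a := by
    rw [sum_filter, sum_filter]
    exact (sum_subset (subset_univ s) fun a _ ha => by simp [hout a ha]).symm
  exact ⟨d, hd0, hout, fun P _ => (hsupp _).trans (sum_filter_comp_eq_zero hfd P),
    fun Q _ => (hsupp _).trans (sum_filter_comp_eq_zero hgd Q)⟩

end Fibers

theorem eq_zero_of_mem_extremePoints_of_eventually_add_smul_mem {E : Type*} [AddCommGroup E]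
    [Module ℝ E] {K : Set E} {w d : E} (hw : w ∈ K.extremePoints ℝ)
    (h : ∀ᶠ θ in 𝓝 (0 : ℝ), w + θ • d ∈ K) : d = 0 := by
  have hpm : ∀ᶠ θ in 𝓝[>] (0 : ℝ), (w + θ • d ∈ K ∧ w + (-θ) • d ∈ K) ∧ 0 < θ :=
    ((h.and ((continuous_neg.tendsto' 0 0 neg_zero).eventually h)).filter_mono
      nhdsWithin_le_nhds).and self_mem_nhdsWithin
  obtain ⟨θ, ⟨hplus, hminus⟩, hθ⟩ := hpm.exists
  have hmid : w ∈ openSegment ℝ (w + (-θ) • d) (w + θ • d) :=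
    ⟨1 / 2, 1 / 2, by norm_num, by norm_num, by norm_num, by module⟩
  have hθd : θ • d = 0 := by
    simpa using ((mem_extremePoints.1 hw).2 _ hminus _ hplus hmid).2
  exact (smul_eq_zero.1 hθd).resolve_left hθ.ne'

theorem eventually_le_add_mul {a b c : ℝ} (h : a ≤ b) (hc : a < b ∨ c = 0) :
    ∀ᶠ θ in 𝓝 (0 : ℝ), a ≤ b + θ * c := by
  rcases hc with hlt | rfl
  · have hcont : Continuous fun θ : ℝ => b + θ * c := by fun_prop
    exact ((hcont.tendsto' 0 b (by simp)).eventually_const_lt hlt).mono fun _ => le_of_lt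
  · simpa using h

theorem lt_of_mem_Icc_of_notMem_zmultiples_one {x : ℝ} (hx : x ∈ Set.Icc 0 1)
    (hint : x ∉ AddSubgroup.zmultiples (1 : ℝ)) : 0 < x ∧ x < 1 :=
  ⟨hx.1.lt_of_ne fun h => hint (h ▸ zero_mem _),
    hx.2.lt_of_ne fun h => hint (h ▸ AddSubgroup.mem_zmultiples (1 : ℝ))⟩

theorem eq_zero_or_eq_one_of_mem_Icc_of_mem_zmultiples_one {x : ℝ} (hx : x ∈ Set.Icc 0 1)
    (hint : x ∈ AddSubgroup.zmultiples (1 : ℝ)) : x = 0 ∨ x = 1 := by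
  obtain ⟨m, rfl⟩ := AddSubgroup.mem_zmultiples_iff.1 hint
  rw [zsmul_one] at hx ⊢
  have h0 : 0 ≤ m := by exact_mod_cast hx.1
  have h1 : m ≤ 1 := by exact_mod_cast hx.2
  obtain rfl | rfl : m = 0 ∨ m = 1 := by omega
  all_goals simp

section PrefixPolytope

variable {n : ℕ}

def prefixSum (t : ℕ) : (Fin n → ℝ) →ₗ[ℝ] ℝ := ∑ i with i.val < t, LinearMap.proj i

theorem prefixSum_apply (t : ℕ) (x : Fin n → ℝ) : prefixSum t x = ∑ i with i.val < t, x i := by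
  simp [prefixSum]

theorem prefixSum_zero_left (x : Fin n → ℝ) : prefixSum 0 x = 0 := by
  simp [prefixSum_apply]

theorem prefixSum_indVec (t : ℕ) (B : Finset (Fin n)) :
    prefixSum t (indVec B) = #{i ∈ B | i.val < t} := by
  simp [prefixSum_apply, indVec, sum_ite_mem, filter_inter]

def prefixPolytope (c : ℕ → ℕ) : Set (Fin n → ℝ) :=
  {x | (∀ i, x i ∈ Set.Icc 0 1) ∧ (∀ t ≤ n, (c t : ℝ) ≤ prefixSum t x) ∧ prefixSum n x = c n}

theorem prefixPolytope_eq_inter (c : ℕ → ℕ) :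
    prefixPolytope (n := n) c = Set.univ.pi (fun _ => Set.Icc 0 1) ∩
      ((⋂ t ≤ n, {x | (c t : ℝ) ≤ prefixSum t x}) ∩ {x | prefixSum n x = c n}) := by
  ext x
  simp only [prefixPolytope, Set.mem_ofPred_eq, Set.mem_inter_iff, Set.mem_univ_pi,
    Set.mem_iInter]

theorem convex_prefixPolytope (c : ℕ → ℕ) : Convex ℝ (prefixPolytope (n := n) c) := by
  rw [prefixPolytope_eq_inter]
  exact (convex_pi fun _ _ => convex_Icc 0 1).inter
    ((convex_iInter₂ fun t _ => convex_halfSpace_ge (prefixSum t).isLinear _).inter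
      (convex_hyperplane (prefixSum n).isLinear _))

theorem isClosed_prefixPolytope (c : ℕ → ℕ) : IsClosed (prefixPolytope (n := n) c) := by
  rw [prefixPolytope_eq_inter]
  exact (isClosed_set_pi fun _ _ => isClosed_Icc).inter
    ((isClosed_biInter fun t _ =>
        isClosed_le continuous_const (prefixSum t).continuous_of_finiteDimensional).inter
      (isClosed_eq (prefixSum n).continuous_of_finiteDimensional continuous_const))

theorem indVec_mem_prefixPolytope_iff {B S : Finset (Fin n)} :
    indVec B ∈ prefixPolytope (fun t => #{i ∈ S | i.val < t}) ↔ DomLE B S := by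
  have hcard (A : Finset (Fin n)) : #{i ∈ A | i.val < n} = #A := by
    rw [filter_true_of_mem fun i _ => i.isLt]
  rw [domLE_iff_forall_le]
  simp only [prefixPolytope, prefixSum_indVec, hcard, Set.mem_ofPred_eq, Nat.cast_le,
    Nat.cast_inj]
  have h01 (i : Fin n) : indVec B i ∈ Set.Icc 0 1 := by unfold indVec; split_ifs <;> simp
  simp only [h01, implies_true, true_and]
  exact and_comm

theorem smPolytope_subset_prefixPolytope (S : Finset (Fin n)) :
    smPolytope S ⊆ prefixPolytope (fun t => #{i ∈ S | i.val < t}) :=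
  convexHull_min (by rintro _ ⟨B, hB, rfl⟩; exact indVec_mem_prefixPolytope_iff.2 hB)
    (convex_prefixPolytope _)

variable {c : ℕ → ℕ} {x : Fin n → ℝ}

theorem prefixSum_sub_prefixSum {s e : ℕ} (hse : s ≤ e) (x : Fin n → ℝ) :
    prefixSum e x - prefixSum s x = ∑ i with s ≤ i.val ∧ i.val < e, x i := by
  rw [sub_eq_iff_eq_add', prefixSum_apply, prefixSum_apply,
    ← sum_filter_add_sum_filter_not _ (fun i : Fin n => i.val < s), filter_filter, filter_filter]
  congr 2 <;> ext i <;> simp only [mem_filter, mem_univ, true_and, not_lt] <;> omega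

noncomputable def tightTimes (c : ℕ → ℕ) (x : Fin n → ℝ) : Finset ℕ :=
  {t ∈ range (n + 1) | prefixSum t x = c t}

theorem mem_tightTimes {t : ℕ} : t ∈ tightTimes c x ↔ t ≤ n ∧ prefixSum t x = c t := by
  simp [tightTimes]

theorem exists_ne_notMem_zmultiples_of_mem_prefixPolytope (hx : x ∈ prefixPolytope c) {i : Fin n}
    (hi : x i ∉ AddSubgroup.zmultiples (1 : ℝ)) :
    ∃ i' ≠ i, x i' ∉ AddSubgroup.zmultiples (1 : ℝ) ∧
      {t ∈ tightTimes c x | t ≤ i'.val} = {t ∈ tightTimes c x | t ≤ i.val} := by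
  obtain ⟨-, hxc, hxn⟩ := hx
  have h0 : 0 ∈ tightTimes c x := by
    have := hxc 0 (Nat.zero_le n)
    rw [prefixSum_zero_left, Nat.cast_nonpos] at this
    simp [mem_tightTimes, prefixSum_zero_left, this]
  obtain ⟨s, hs, e, he, hblock⟩ := (tightTimes c x).exists_filter_le_eq_iff
    ⟨0, h0, Nat.zero_le _⟩ ⟨n, mem_tightTimes.2 ⟨le_rfl, hxn⟩, i.isLt⟩
  obtain ⟨hsi, hie⟩ := (hblock i.val).1 rfl
  have hsum : ∑ i' with s ≤ i'.val ∧ i'.val < e, x i' ∈ AddSubgroup.zmultiples (1 : ℝ) := by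
    rw [← prefixSum_sub_prefixSum (hsi.trans hie.le), (mem_tightTimes.1 hs).2,
      (mem_tightTimes.1 he).2]
    simpa using AddSubgroup.intCast_mem_zmultiples_one (R := ℝ) ((c e : ℤ) - c s)
  obtain ⟨i', hi'block, hne, hi'⟩ :=
    exists_ne_notMem_of_sum_mem hsum (mem_filter.2 ⟨mem_univ i, hsi, hie⟩) hi
  exact ⟨i', hne, hi', (hblock i'.val).2 (mem_filter.1 hi'block).2⟩

theorem eventually_add_smul_mem_prefixPolytope (hx : x ∈ prefixPolytope c) {y : Fin n → ℝ}
    (hy : ∀ i, y i ≠ 0 → x i ∉ AddSubgroup.zmultiples (1 : ℝ))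
    (htight : ∀ t ≤ n, prefixSum t x = c t → prefixSum t y = 0) :
    ∀ᶠ θ in 𝓝 (0 : ℝ), x + θ • y ∈ prefixPolytope c := by
  obtain ⟨hx01, hxc, hxn⟩ := hx
  have hentry (i : Fin n) : ∀ᶠ θ in 𝓝 (0 : ℝ), (x + θ • y) i ∈ Set.Icc 0 1 := by
    by_cases hyi : y i = 0
    · simpa [hyi] using hx01 i
    have hcont : Continuous fun θ : ℝ => x i + θ * y i := by fun_prop
    exact ((hcont.tendsto' 0 _ (by simp)).eventually (isOpen_Ioo.mem_nhds
      (lt_of_mem_Icc_of_notMem_zmultiples_one (hx01 i) (hy i hyi)))).mono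
      fun _ h => Set.Ioo_subset_Icc_self h
  have hprefix (t : ℕ) (ht : t ≤ n) :
      ∀ᶠ θ in 𝓝 (0 : ℝ), (c t : ℝ) ≤ prefixSum t (x + θ • y) := by
    simp only [map_add, map_smul, smul_eq_mul]
    refine eventually_le_add_mul (hxc t ht) ?_
    by_cases hxt : prefixSum t x = c t
    exacts [.inr (htight t ht hxt), .inl ((hxc t ht).lt_of_ne' hxt)]
  filter_upwards [eventually_all.2 hentry,
    (eventually_all_finite (Set.finite_Iic n)).2 hprefix] with θ h01 hc
  refine ⟨h01, hc, ?_⟩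
  rw [map_add, map_smul, htight n le_rfl hxn, hxn, smul_zero, add_zero]

end PrefixPolytope

section PrefixTransport

variable {ι : Type*} [Fintype ι] {n : ℕ} {c : ι → ℕ → ℕ} {p : Fin n → ℤ}

def prefixTransport (c : ι → ℕ → ℕ) (p : Fin n → ℤ) : Set (ι → Fin n → ℝ) :=
  {z | (∀ j, z j ∈ prefixPolytope (c j)) ∧ ∀ i, ∑ j, z j i = p i}

theorem isCompact_prefixTransport (c : ι → ℕ → ℕ) (p : Fin n → ℤ) :
    IsCompact (prefixTransport c p) := by
  have hclosed : IsClosed (prefixTransport c p) := by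
    simp only [prefixTransport, Set.ofPred_and, Set.ofPred_forall]
    exact (isClosed_iInter fun j =>
        (isClosed_prefixPolytope (c j)).preimage (continuous_apply j)).inter
      (isClosed_iInter fun i => isClosed_eq (by fun_prop) continuous_const)
  refine (isCompact_univ_pi fun _ => isCompact_univ_pi fun _ => isCompact_Icc).of_isClosed_subset
    hclosed fun z hz => Set.mem_univ_pi.2 fun j => Set.mem_univ_pi.2 fun i => (hz.1 j).1 i

theorem eventually_add_smul_mem_prefixTransport {z d : ι → Fin n → ℝ}
    (hz : z ∈ prefixTransport c p)
    (hd : ∀ j i, d j i ≠ 0 → z j i ∉ AddSubgroup.zmultiples (1 : ℝ))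
    (htight : ∀ j, ∀ t ≤ n, prefixSum t (z j) = c j t → prefixSum t (d j) = 0)
    (hcol : ∀ i, ∑ j, d j i = 0) :
    ∀ᶠ θ in 𝓝 (0 : ℝ), z + θ • d ∈ prefixTransport c p := by
  filter_upwards [eventually_all.2 fun j =>
    eventually_add_smul_mem_prefixPolytope (hz.1 j) (hd j) (htight j)] with θ hθ
  refine ⟨hθ, fun i => ?_⟩
  simp [sum_add_distrib, ← mul_sum, hcol, hz.2]

theorem exists_zero_one_mem_prefixTransport (hne : (prefixTransport c p).Nonempty) :
    ∃ z ∈ prefixTransport c p, ∀ j i, z j i = 0 ∨ z j i = 1 := by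
  classical
  obtain ⟨w, hw⟩ := (isCompact_prefixTransport c p).extremePoints_nonempty hne
  suffices hint : ∀ j i, w j i ∈ AddSubgroup.zmultiples (1 : ℝ) from
    ⟨w, hw.1, fun j i => eq_zero_or_eq_one_of_mem_Icc_of_mem_zmultiples_one ((hw.1.1 j).1 i)
      (hint j i)⟩
  by_contra! hfrac
  obtain ⟨j₀, i₀, h₀⟩ := hfrac
  set Fr : Finset (ι × Fin n) := {q | w q.1 q.2 ∉ AddSubgroup.zmultiples (1 : ℝ)}
  -- Entries of row `j` with the same tight times at or below their index form a block.
  have hblock : ∀ q ∈ Fr, ∃ q' ∈ Fr, q' ≠ q ∧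
      (q'.1, {t ∈ tightTimes (c q'.1) (w q'.1) | t ≤ q'.2.val}) =
        (q.1, {t ∈ tightTimes (c q.1) (w q.1) | t ≤ q.2.val}) := by
    rintro ⟨j, i⟩ hq
    obtain ⟨i', hne, hi', heq⟩ :=
      exists_ne_notMem_zmultiples_of_mem_prefixPolytope (hw.1.1 j) (by simpa [Fr] using hq)
    exact ⟨(j, i'), by simpa [Fr], by simpa, by simp [heq]⟩
  have hcolumn : ∀ q ∈ Fr, ∃ q' ∈ Fr, q' ≠ q ∧ q'.2 = q.2 := by
    rintro ⟨j, i⟩ hq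
    obtain ⟨j', -, hne, hj'⟩ := exists_ne_notMem_of_sum_mem
      (hw.1.2 i ▸ AddSubgroup.intCast_mem_zmultiples_one (p i)) (mem_univ j)
      (by simpa [Fr] using hq)
    exact ⟨(j', i), by simpa [Fr], by simpa, rfl⟩
  obtain ⟨d, hd0, hdFr, hdrow, hdcol⟩ :=
    exists_ne_zero_sum_filter_comp_eq_zero ⟨(j₀, i₀), by simpa [Fr]⟩ hblock hcolumn
  refine hd0 (funext fun q => congrFun (congrFun
    (eq_zero_of_mem_extremePoints_of_eventually_add_smul_mem (d := fun j i => d (j, i)) hw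
      (eventually_add_smul_mem_prefixTransport hw.1 ?_ ?_ ?_)) q.1) q.2)
  · exact fun j i h => by simpa [Fr] using mt (hdFr (j, i)) h
  · intro j t ht hwt
    have htT : t ∈ tightTimes (c j) (w j) := mem_tightTimes.2 ⟨ht, hwt⟩
    -- for a tight `t`, the prefix `{i | i < t}` of row `j` is a union of blocks
    rw [prefixSum_apply, ← hdrow (fun b => b.1 = j ∧ t ∉ b.2)]
    simp [htT, Fintype.sum_prod_type, sum_filter, ite_and]
  · intro i
    simpa [Fintype.sum_prod_type, sum_filter] using hdcol (· = i)

end PrefixTransport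

theorem eq_indVec_of_forall_eq_zero_or_eq_one {n : ℕ} {x : Fin n → ℝ}
    (hx : ∀ i, x i = 0 ∨ x i = 1) : x = indVec {i | x i = 1} := by
  ext i
  rcases hx i with h | h <;> simp [indVec, h]

/-- Every lattice point of the Minkowski sum `Σ_{j=1}^n P(SM_n(D_j))` can be written as
`Σ_{j=1}^n ζ^{B_j}` where each `B_j` is a basis of `SM_n(D_j)` (i.e. `B_j ≤ D_j`) and
`ζ^{B_j}` is its indicator vector. -/
theorem stmt6 (n : ℕ) (D : Fin n → Finset (Fin n)) (p : Fin n → ℝ)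
    (hp : p ∈ ∑ j : Fin n, smPolytope (D j)) (hint : ∀ i, ∃ m : ℤ, p i = (m : ℝ)) :
    ∃ B : Fin n → Finset (Fin n), (∀ j, DomLE (B j) (D j)) ∧
      p = ∑ j : Fin n, indVec (B j) := by
  obtain ⟨g, hg, rfl⟩ := (Set.mem_fintype_sum _ _).1 hp
  choose m hm using hint
  have hgX : g ∈ prefixTransport (fun j t => #{i ∈ D j | i.val < t}) m :=
    ⟨fun j => smPolytope_subset_prefixPolytope (D j) (hg j), fun i => by simp [← hm]⟩
  obtain ⟨z, hz, hz01⟩ := exists_zero_one_mem_prefixTransport ⟨g, hgX⟩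
  have hzind (j : Fin n) := eq_indVec_of_forall_eq_zero_or_eq_one (hz01 j)
  refine ⟨fun j => {i | z j i = 1},
    fun j => indVec_mem_prefixPolytope_iff.1 (hzind j ▸ hz.1 j), ?_⟩
  ext i
  simp only [← hzind]
  rw [hm, Finset.sum_apply, hz.2]
end
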